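/- Let 𝒞 be a collection of subsets of X, let 𝒫 ⊆ [0,1]^X be a family of predictors containing the all-ones predictor p(x) = 1, and let 𝒜 be a deterministic learning algorithm whose outputs all lie in 𝒫. If 𝒜 is (𝒞, n, ε₁, δ₁)-multigroup robust, 𝒜 is (n, ε₂, δ₂)-accurate-in-expectation, and 𝒫 satisfies (𝒞, n, ε₃, δ₃)-uniform convergence, then 𝒜 is a (𝒞, n, ε₁ + ε₂ + 2ε₃, 2δ₁ + 2δ₂ + δ₃)-multiaccurate learning algorithm: for every distribution D on X × {0,1}, with probability at least 1 − (2δ₁ + 2δ₂ + δ₃) over n i.i.d. draws S from D, the predictor p = 𝒜(S) satisfies |E_{(x,y)∼D}[(y − p(x))·1[x ∈ C]]| ≤ ε₁ + ε₂ + 2ε₃ for every C ∈ 𝒞. -/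
import Mathlib


open Finset
open scoped BigOperators Classical

noncomputable section

variable {X : Type*}

/-- The real value of a Boolean label. -/
def bval (y : Bool) : ℝ := if y then 1 else 0

/-- The real-valued indicator of a set `C ⊆ X`. -/
def ind (C : Set X) (x : X) : ℝ := if x ∈ C then 1 else 0

/-- `D` is a probability mass function on a finite type. -/
def IsDist {α : Type*} [Fintype α] (D : α → ℝ) : Prop :=
  (∀ a, 0 ≤ D a) ∧ ∑ a, D a = 1

/-- The multiaccuracy error `MA-err_D(p, C) = E_{(x,y)∼D}[(y − p(x))·1[x ∈ C]]`. -/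
def MAerr [Fintype X] (D : X × Bool → ℝ) (p : X → ℝ) (C : Set X) : ℝ :=
  ∑ z : X × Bool, D z * ((bval z.2 - p z.1) * ind C z.1)

/-- The `X`-marginal of a distribution on `X × Bool`. -/
def marg [Fintype X] (D : X × Bool → ℝ) (x : X) : ℝ := ∑ y : Bool, D (x, y)

/-- The statistical distance between two distributions on `X`, restricted to `C`:
`Δ_C(DX, DX') = Σ_{x ∈ C} |DX x − DX' x|`. -/
def statDist [Fintype X] (DX DX' : X → ℝ) (C : Set X) : ℝ :=
  ∑ x : X, ind C x * |DX x - DX' x|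

/-- The probability, over `n` i.i.d. draws from `D`, of the event `E`. -/
def iidProb {α : Type*} [Fintype α] (D : α → ℝ) (n : ℕ)
    (E : (Fin n → α) → Prop) : ℝ :=
  ∑ s : Fin n → α, if E s then ∏ i, D (s i) else 0

/-- The multiplicity `μ_S(x)` of the point `x` among the `x`-values of the dataset `S`. -/
def mult {n : ℕ} (S : Fin n → X × Bool) (x : X) : ℕ :=
  (univ.filter fun i => (S i).1 = x).card

/-- `|(S Δ_X S') ∩ C| = Σ_{x ∈ C} |μ_S(x) − μ_{S'}(x)|`, the size of the multiset
symmetric difference of the `x`-values of `S` and `S'`, restricted to `C`. -/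
def symmDiffC [Fintype X] {n m : ℕ} (S : Fin n → X × Bool) (S' : Fin m → X × Bool)
    (C : Set X) : ℝ :=
  ∑ x : X, ind C x * |(mult S x : ℝ) - (mult S' x : ℝ)|


section Aux
variable {α β : Type*} [Fintype α] [Fintype β]

lemma sum_pi_prod (D : α → ℝ) (hD : IsDist D) (n : ℕ) :
    ∑ s : Fin n → α, ∏ i, D (s i) = 1 := by
  have h := (Finset.prod_univ_sum (fun _ : Fin n => (univ : Finset α))
    (fun _ a => D a)).symm
  simpa [Fintype.piFinset_univ, hD.2] using h

lemma iidProb_le_one (D : α → ℝ) (hD : IsDist D) (n : ℕ) (E : (Fin n → α) → Prop) :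
    iidProb D n E ≤ 1 := by
  rw [← sum_pi_prod D hD n]
  refine Finset.sum_le_sum fun s _ => ?_
  have : 0 ≤ ∏ i, D (s i) := Finset.prod_nonneg fun i _ => hD.1 _
  split_ifs <;> simp [this]

lemma iidProb_mono (D : α → ℝ) (hD : IsDist D) (n : ℕ) {E F : (Fin n → α) → Prop}
    (h : ∀ s, E s → F s) : iidProb D n E ≤ iidProb D n F := by
  refine Finset.sum_le_sum fun s _ => ?_
  have hw : 0 ≤ ∏ i, D (s i) := Finset.prod_nonneg fun i _ => hD.1 _
  by_cases hE : E s
  · simp [hE, h s hE]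
  · simp [hE]; split_ifs <;> simp [hw]

lemma iidProb_and (D : α → ℝ) (hD : IsDist D) (n : ℕ) (E F : (Fin n → α) → Prop) :
    iidProb D n E + iidProb D n F - 1 ≤ iidProb D n fun s => E s ∧ F s := by
  have h1 := sum_pi_prod D hD n
  unfold iidProb
  rw [← h1, ← Finset.sum_add_distrib, ← Finset.sum_sub_distrib]
  refine Finset.sum_le_sum fun s _ => ?_
  have hw : 0 ≤ ∏ i, D (s i) := Finset.prod_nonneg fun i _ => hD.1 _
  by_cases hE : E s <;> by_cases hF : F s <;> simp [hE, hF] <;> linarith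

lemma iidProb_comp (D : α → ℝ) (f : α → β) (n : ℕ) (E : (Fin n → β) → Prop) :
    iidProb D n (fun s => E (fun i => f (s i))) =
      iidProb (fun b => ∑ a ∈ univ.filter (fun a => f a = b), D a) n E := by
  unfold iidProb
  rw [← Finset.sum_fiberwise univ (fun s : Fin n → α => fun i => f (s i))
      (fun s => if E (fun i => f (s i)) then ∏ i, D (s i) else 0)]
  refine Finset.sum_congr rfl fun t _ => ?_
  have hfib : (univ.filter fun s : Fin n → α => (fun i => f (s i)) = t)
      = Fintype.piFinset (fun i => univ.filter fun a => f a = t i) := by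
    ext s
    simp [Fintype.mem_piFinset, funext_iff]
  calc ∑ s ∈ univ.filter (fun s : Fin n → α => (fun i => f (s i)) = t),
        (if E (fun i => f (s i)) then ∏ i, D (s i) else 0)
      = ∑ s ∈ univ.filter (fun s : Fin n → α => (fun i => f (s i)) = t),
        (if E t then ∏ i, D (s i) else 0) := by
        refine Finset.sum_congr rfl fun s hs => ?_
        rw [(Finset.mem_filter.mp hs).2]
    _ = if E t then ∑ s ∈ univ.filter (fun s : Fin n → α => (fun i => f (s i)) = t),
          ∏ i, D (s i) else 0 := by
        rw [Finset.sum_ite_irrel, Finset.sum_const_zero]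
    _ = if E t then ∏ i, ∑ a ∈ univ.filter (fun a => f a = t i), D a else 0 := by
        rw [hfib, Finset.prod_univ_sum]

lemma isDist_push (D : α → ℝ) (hD : IsDist D) (f : α → β) :
    IsDist (fun b => ∑ a ∈ univ.filter (fun a => f a = b), D a) := by
  constructor
  · intro b
    exact Finset.sum_nonneg fun a _ => hD.1 a
  · rw [Finset.sum_fiberwise univ f D]
    exact hD.2

lemma sum_push (D : α → ℝ) (f : α → β) (g : β → ℝ) :
    ∑ b, (∑ a ∈ univ.filter (fun a => f a = b), D a) * g b = ∑ a, D a * g (f a) := by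
  rw [← Finset.sum_fiberwise univ f (fun a => D a * g (f a))]
  refine Finset.sum_congr rfl fun b _ => ?_
  rw [Finset.sum_mul]
  refine Finset.sum_congr rfl fun a ha => ?_
  rw [(Finset.mem_filter.mp ha).2]

lemma push_exists (D : α → ℝ) (hD : IsDist D) (f : α → β) :
    ∃ D' : β → ℝ, IsDist D' ∧
      (∀ (n : ℕ) (E : (Fin n → β) → Prop),
        iidProb D n (fun s => E (fun i => f (s i))) = iidProb D' n E) ∧
      (∀ g : β → ℝ, ∑ b, D' b * g b = ∑ a, D a * g (f a)) :=
  ⟨_, isDist_push D hD f, fun n E => iidProb_comp D f n E, fun g => sum_push D f g⟩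

end Aux


/-- Auxiliary event: the uniform convergence event. -/
def EUC [Fintype X] (𝓟 : Set (X → ℝ)) (𝒞 : Set (Set X)) (n : ℕ) (ε : ℝ)
    (D : X × Bool → ℝ) (s : Fin n → X × Bool) : Prop :=
  ∀ p ∈ 𝓟, ∀ C ∈ 𝒞,
    |(1 / (n : ℝ)) * ∑ i, p (s i).1 * ind C (s i).1
        - ∑ z : X × Bool, D z * (p z.1 * ind C z.1)| ≤ ε ∧
    |(1 / (n : ℝ)) * ∑ i, bval (s i).2 * ind C (s i).1
        - ∑ z : X × Bool, D z * (bval z.2 * ind C z.1)| ≤ ε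

/-- Auxiliary event: the multigroup robustness event. -/
def ERob [Fintype X] (𝒞 : Set (Set X)) (A : ∀ k, (Fin k → X × Bool) → X → ℝ)
    (n : ℕ) (ε : ℝ) (DX : X → ℝ) (xs : Fin n → X) : Prop :=
  ∀ (ys : Fin n → Bool) (m : ℕ) (S' : Fin m → X × Bool), ∀ C ∈ 𝒞,
    |∑ x : X, DX x * ((A n (fun i => (xs i, ys i)) x - A m S' x) * ind C x)| ≤
      (1 / (n : ℝ)) *
          |∑ i, bval (ys i) * ind C (xs i) - ∑ j, bval (S' j).2 * ind C (S' j).1|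
        + (1 / (n : ℝ)) * symmDiffC (fun i => (xs i, ys i)) S' C + ε

/-- Auxiliary event: the accuracy-in-expectation event. -/
def EAcc [Fintype X] (A : ∀ k, (Fin k → X × Bool) → X → ℝ) (n : ℕ) (ε : ℝ)
    (D : X × Bool → ℝ) (S : Fin n → X × Bool) : Prop :=
  |∑ z : X × Bool, D z * (bval z.2 - A n S z.1)| ≤ ε

lemma ind_nonneg (C : Set X) (x : X) : 0 ≤ ind C x := by
  unfold ind; split_ifs <;> norm_num

lemma ind_le_one (C : Set X) (x : X) : ind C x ≤ 1 := by
  unfold ind; split_ifs <;> norm_num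

lemma bval_nonneg (y : Bool) : 0 ≤ bval y := by
  unfold bval; split_ifs <;> norm_num

lemma bval_le_one (y : Bool) : bval y ≤ 1 := by
  unfold bval; split_ifs <;> norm_num

lemma det_core [Fintype X] (D : X × Bool → ℝ) (hD : IsDist D)
    (p p₀ p₁ : X → ℝ)
    (hp₀ : ∀ x, p₀ x ∈ Set.Icc (0:ℝ) 1) (hp₁ : ∀ x, p₁ x ∈ Set.Icc (0:ℝ) 1)
    (C : Set X) (n : ℕ) (hn : 0 < n) (xs : Fin n → X) (ys : Fin n → Bool)
    (ε₁ ε₂ ε₃ : ℝ)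
    (hR0 : |∑ z : X × Bool, D z * ((p z.1 - p₀ z.1) * ind C z.1)| ≤
      (1/(n:ℝ)) * |∑ i, bval (ys i) * ind C (xs i)| + ε₁)
    (hR1 : |∑ z : X × Bool, D z * ((p z.1 - p₁ z.1) * ind C z.1)| ≤
      (1/(n:ℝ)) * |∑ i, bval (ys i) * ind C (xs i) - ∑ i, ind C (xs i)| + ε₁)
    (hA0 : |∑ z : X × Bool, D z * p₀ z.1| ≤ ε₂)
    (hA1 : |∑ z : X × Bool, D z * (1 - p₁ z.1)| ≤ ε₂)
    (hU1 : |(1/(n:ℝ)) * ∑ i, ind C (xs i) - ∑ z : X × Bool, D z * ind C z.1| ≤ ε₃)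
    (hU2 : |(1/(n:ℝ)) * ∑ i, bval (ys i) * ind C (xs i)
        - ∑ z : X × Bool, D z * (bval z.2 * ind C z.1)| ≤ ε₃) :
    |MAerr D p C| ≤ ε₁ + ε₂ + 2 * ε₃ := by
  have hn' : (0:ℝ) < (n:ℝ) := by exact_mod_cast hn
  have hn'' : (0:ℝ) ≤ 1/(n:ℝ) := by positivity
  -- empirical quantities
  set a := (1/(n:ℝ)) * ∑ i, bval (ys i) * ind C (xs i) with ha
  set b := (1/(n:ℝ)) * ∑ i, ind C (xs i) with hb
  set Y := ∑ z : X × Bool, D z * (bval z.2 * ind C z.1) with hY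
  set M := ∑ z : X × Bool, D z * ind C z.1 with hM
  set P := ∑ z : X × Bool, D z * (p z.1 * ind C z.1) with hP
  set P₀ := ∑ z : X × Bool, D z * (p₀ z.1 * ind C z.1) with hP₀
  set P₁ := ∑ z : X × Bool, D z * (p₁ z.1 * ind C z.1) with hP₁
  -- sum of bvals is nonneg
  have hsum_nonneg : 0 ≤ ∑ i, bval (ys i) * ind C (xs i) :=
    Finset.sum_nonneg fun i _ => mul_nonneg (bval_nonneg _) (ind_nonneg _ _)
  have hsum_le : ∑ i, bval (ys i) * ind C (xs i) ≤ ∑ i, ind C (xs i) :=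
    Finset.sum_le_sum fun i _ => by
      nlinarith [bval_le_one (ys i), ind_nonneg C (xs i)]
  have hab : a ≤ b := by
    rw [ha, hb]; exact mul_le_mul_of_nonneg_left hsum_le hn''
  have ha0 : 0 ≤ a := by rw [ha]; exact mul_nonneg hn'' hsum_nonneg
  -- rewrite hR0 RHS
  have hR0' : |P - P₀| ≤ a + ε₁ := by
    have e1 : ∑ z : X × Bool, D z * ((p z.1 - p₀ z.1) * ind C z.1) = P - P₀ := by
      rw [hP, hP₀, ← Finset.sum_sub_distrib]
      exact Finset.sum_congr rfl fun z _ => by ring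
    have e2 : |∑ i, bval (ys i) * ind C (xs i)| = ∑ i, bval (ys i) * ind C (xs i) :=
      abs_of_nonneg hsum_nonneg
    rw [e1, e2] at hR0
    rw [ha]
    exact hR0
  have hR1' : |P - P₁| ≤ (b - a) + ε₁ := by
    have e1 : ∑ z : X × Bool, D z * ((p z.1 - p₁ z.1) * ind C z.1) = P - P₁ := by
      rw [hP, hP₁, ← Finset.sum_sub_distrib]
      exact Finset.sum_congr rfl fun z _ => by ring
    have e2 : |∑ i, bval (ys i) * ind C (xs i) - ∑ i, ind C (xs i)|
        = ∑ i, ind C (xs i) - ∑ i, bval (ys i) * ind C (xs i) := by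
      rw [abs_sub_comm]; exact abs_of_nonneg (by linarith)
    rw [e1, e2] at hR1
    rw [ha, hb]
    calc |P - P₁| ≤ (1/(n:ℝ)) * (∑ i, ind C (xs i) - ∑ i, bval (ys i) * ind C (xs i)) + ε₁ := hR1
      _ = (1/(n:ℝ)) * ∑ i, ind C (xs i) - (1/(n:ℝ)) * ∑ i, bval (ys i) * ind C (xs i) + ε₁ := by ring
  -- accuracy facts
  have hP₀nonneg : 0 ≤ P₀ :=
    Finset.sum_nonneg fun z _ => mul_nonneg (hD.1 z)
      (mul_nonneg (hp₀ z.1).1 (ind_nonneg _ _))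
  have hP₀le : P₀ ≤ ε₂ := by
    have h1 : P₀ ≤ ∑ z : X × Bool, D z * p₀ z.1 := by
      refine Finset.sum_le_sum fun z _ => ?_
      have h4 : p₀ z.1 * ind C z.1 ≤ p₀ z.1 * 1 :=
        mul_le_mul_of_nonneg_left (ind_le_one C z.1) (hp₀ z.1).1
      refine mul_le_mul_of_nonneg_left ?_ (hD.1 z)
      linarith
    have h2 := (abs_le.mp hA0).2
    linarith
  have hP₁ge : M - ε₂ ≤ P₁ := by
    have h1 : ∑ z : X × Bool, D z * (1 - p₁ z.1)
        = (∑ z : X × Bool, D z) - ∑ z : X × Bool, D z * p₁ z.1 := by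
      rw [← Finset.sum_sub_distrib]
      exact Finset.sum_congr rfl fun z _ => by ring
    have h2 := (abs_le.mp hA1).2
    rw [h1, hD.2] at h2
    have key : ∑ z : X × Bool, (D z * ind C z.1 + D z * p₁ z.1 - D z * (p₁ z.1 * ind C z.1))
        ≤ ∑ z : X × Bool, D z := by
      refine Finset.sum_le_sum fun z _ => ?_
      have hd := hD.1 z
      have h01 := hp₁ z.1
      have hi1 := ind_le_one C z.1
      have hi0 := ind_nonneg C z.1
      have hfact : ind C z.1 + p₁ z.1 - p₁ z.1 * ind C z.1 ≤ 1 := by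
        nlinarith [mul_nonneg (by linarith : (0:ℝ) ≤ 1 - ind C z.1)
          (by linarith [h01.2] : (0:ℝ) ≤ 1 - p₁ z.1)]
      calc D z * ind C z.1 + D z * p₁ z.1 - D z * (p₁ z.1 * ind C z.1)
          = D z * (ind C z.1 + p₁ z.1 - p₁ z.1 * ind C z.1) := by ring
        _ ≤ D z * 1 := mul_le_mul_of_nonneg_left hfact hd
        _ = D z := mul_one _
    rw [Finset.sum_sub_distrib, Finset.sum_add_distrib, hD.2] at key
    rw [hM, hP₁]
    linarith
  -- Y ≤ M
  have hYM : Y ≤ M := by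
    rw [hY, hM]
    refine Finset.sum_le_sum fun z _ => ?_
    have h4 : bval z.2 * ind C z.1 ≤ 1 * ind C z.1 :=
      mul_le_mul_of_nonneg_right (bval_le_one z.2) (ind_nonneg C z.1)
    refine mul_le_mul_of_nonneg_left ?_ (hD.1 z)
    linarith
  -- MAerr = Y - P
  have hMA : MAerr D p C = Y - P := by
    rw [MAerr, hY, hP, ← Finset.sum_sub_distrib]
    exact Finset.sum_congr rfl fun z _ => by ring
  rw [hMA]
  have u1 := abs_le.mp hU1
  have u2 := abs_le.mp hU2
  have r0 := abs_le.mp hR0'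
  have r1 := abs_le.mp hR1'
  have hε₃ : 0 ≤ ε₃ := le_trans (abs_nonneg _) hU1
  rw [abs_le]
  refine ⟨by linarith [r0.2, u2.2], by linarith [r1.1, u1.2, u2.1]⟩


/-- `𝒜` is `(𝒞, ε)`-empirically multiaccurate: for every `k` and every dataset `S` of size `k`,
the predictor `𝒜(S)` satisfies `|(1/k)·Σᵢ (yᵢ − p(xᵢ))·1[xᵢ ∈ C]| ≤ ε` for all `C ∈ 𝒞`. -/
def EmpMA (A : ∀ k, (Fin k → X × Bool) → X → ℝ) (𝒞 : Set (Set X)) (ε : ℝ) : Prop :=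
  ∀ (k : ℕ), 0 < k → ∀ S : Fin k → X × Bool, ∀ C ∈ 𝒞,
    |(1 / (k : ℝ)) * ∑ i, (bval (S i).2 - A k S (S i).1) * ind C (S i).1| ≤ ε

/-- The family of predictors `𝓟` satisfies `(𝒞, n, ε, δ)`-uniform convergence: for every
distribution `D` on `X × {0,1}`, with probability at least `1 − δ` over `n` i.i.d. draws from
`D`, for all `p ∈ 𝓟` and `C ∈ 𝒞` the empirical averages of `p(x)·1[x ∈ C]` and `y·1[x ∈ C]`
are within `ε` of their expectations. -/
def UnifConv [Fintype X] (𝓟 : Set (X → ℝ)) (𝒞 : Set (Set X)) (n : ℕ) (ε δ : ℝ) : Prop :=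
  ∀ D : X × Bool → ℝ, IsDist D →
    1 - δ ≤ iidProb D n (fun s => ∀ p ∈ 𝓟, ∀ C ∈ 𝒞,
      |(1 / (n : ℝ)) * ∑ i, p (s i).1 * ind C (s i).1
          - ∑ z : X × Bool, D z * (p z.1 * ind C z.1)| ≤ ε ∧
      |(1 / (n : ℝ)) * ∑ i, bval (s i).2 * ind C (s i).1
          - ∑ z : X × Bool, D z * (bval z.2 * ind C z.1)| ≤ ε)

/-- `𝒜` is `(𝒞, n, ε, δ)`-multigroup robust: for every distribution `D_X` on `X`, with
probability at least `1 − δ` over `x₁, …, xₙ` i.i.d. from `D_X`, for every labeling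
`y₁, …, yₙ` and every dataset `S'`, writing `S = ((xᵢ, yᵢ))ᵢ`, `p = 𝒜(S)`, `p' = 𝒜(S')`:
`|E_{x∼D_X}[(p(x) − p'(x))·1[x ∈ C]]|
  ≤ (1/n)·|Σᵢ yᵢ·1[xᵢ ∈ C] − Σⱼ y'ⱼ·1[x'ⱼ ∈ C]| + (1/n)·|(S Δ_X S') ∩ C| + ε`
for every `C ∈ 𝒞`. -/
def MGRobust [Fintype X] (A : ∀ k, (Fin k → X × Bool) → X → ℝ)
    (𝒞 : Set (Set X)) (n : ℕ) (ε δ : ℝ) : Prop :=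
  ∀ DX : X → ℝ, IsDist DX →
    1 - δ ≤ iidProb DX n (fun xs =>
      ∀ (ys : Fin n → Bool) (m : ℕ) (S' : Fin m → X × Bool), ∀ C ∈ 𝒞,
        |∑ x : X, DX x * ((A n (fun i => (xs i, ys i)) x - A m S' x) * ind C x)| ≤
          (1 / (n : ℝ)) *
              |∑ i, bval (ys i) * ind C (xs i) - ∑ j, bval (S' j).2 * ind C (S' j).1|
            + (1 / (n : ℝ)) * symmDiffC (fun i => (xs i, ys i)) S' C + ε)

/-- `𝒜` is `(n, ε, δ)`-accurate-in-expectation: for every distribution `D` on `X × {0,1}`,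
with probability at least `1 − δ` over `n` i.i.d. draws `S` from `D`, the predictor
`p = 𝒜(S)` satisfies `|E_D[y − p(x)]| ≤ ε`. -/
def AccExp [Fintype X] (A : ∀ k, (Fin k → X × Bool) → X → ℝ) (n : ℕ) (ε δ : ℝ) : Prop :=
  ∀ D : X × Bool → ℝ, IsDist D →
    1 - δ ≤ iidProb D n (fun S =>
      |∑ z : X × Bool, D z * (bval z.2 - A n S z.1)| ≤ ε)

/-- Lower bound: multigroup robustness + accuracy-in-expectation ⟹
multiaccuracy. If `𝒜` outputs predictors in `𝓟` (which contains the all-ones predictor),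
is `(𝒞, n, ε₁, δ₁)`-multigroup robust and `(n, ε₂, δ₂)`-accurate-in-expectation, and `𝓟`
satisfies `(𝒞, n, ε₃, δ₃)`-uniform convergence, then `𝒜` is a
`(𝒞, n, ε₁ + ε₂ + 2ε₃, 2δ₁ + 2δ₂ + δ₃)`-multiaccurate learning algorithm. -/
theorem stmt_8 [Fintype X] [Nonempty X]
    (𝒞 : Set (Set X)) (𝓟 : Set (X → ℝ))
    (h𝓟01 : ∀ p ∈ 𝓟, ∀ x, p x ∈ Set.Icc (0 : ℝ) 1)
    (hones : (fun _ : X => (1 : ℝ)) ∈ 𝓟)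
    (A : ∀ k, (Fin k → X × Bool) → X → ℝ)
    (hA𝓟 : ∀ k (S : Fin k → X × Bool), A k S ∈ 𝓟)
    (n : ℕ) (hn : 0 < n) (ε₁ δ₁ ε₂ δ₂ ε₃ δ₃ : ℝ)
    (hRob : MGRobust A 𝒞 n ε₁ δ₁)
    (hAcc : AccExp A n ε₂ δ₂)
    (hUC : UnifConv 𝓟 𝒞 n ε₃ δ₃) :
    ∀ D : X × Bool → ℝ, IsDist D →
      1 - (2 * δ₁ + 2 * δ₂ + δ₃) ≤
        iidProb D n (fun S => ∀ C ∈ 𝒞, |MAerr D (A n S) C| ≤ ε₁ + ε₂ + 2 * ε₃) := by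
  intro D hD
  obtain ⟨DX, hDX, hDXcomp, hDXsum⟩ := push_exists D hD (Prod.fst : X × Bool → X)
  obtain ⟨D0, hD0, hD0comp, hD0sum⟩ :=
    push_exists D hD (fun a : X × Bool => ((a.1, false) : X × Bool))
  obtain ⟨D1, hD1, hD1comp, hD1sum⟩ :=
    push_exists D hD (fun a : X × Bool => ((a.1, true) : X × Bool))
  -- probability bounds for the four pulled-back events
  have hPU : 1 - δ₃ ≤ iidProb D n (EUC 𝓟 𝒞 n ε₃ D) := hUC D hD
  have hPR : 1 - δ₁ ≤ iidProb D n
      (fun S : Fin n → X × Bool => ERob 𝒞 A n ε₁ DX (fun i => (S i).1)) :=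
    le_of_le_of_eq (hRob DX hDX) (hDXcomp n (ERob 𝒞 A n ε₁ DX)).symm
  have hP0 : 1 - δ₂ ≤ iidProb D n
      (fun S : Fin n → X × Bool => EAcc A n ε₂ D0 (fun i => ((S i).1, false))) :=
    le_of_le_of_eq (hAcc D0 hD0) (hD0comp n (EAcc A n ε₂ D0)).symm
  have hP1 : 1 - δ₂ ≤ iidProb D n
      (fun S : Fin n → X × Bool => EAcc A n ε₂ D1 (fun i => ((S i).1, true))) :=
    le_of_le_of_eq (hAcc D1 hD1) (hD1comp n (EAcc A n ε₂ D1)).symm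
  have hδ₁ : 0 ≤ δ₁ := by
    have h2 := le_trans (hRob DX hDX) (iidProb_le_one DX hDX n _)
    linarith
  -- union bound
  have h34 : iidProb D n (fun S : Fin n → X × Bool => EAcc A n ε₂ D0 (fun i => ((S i).1, false)))
      + iidProb D n (fun S : Fin n → X × Bool => EAcc A n ε₂ D1 (fun i => ((S i).1, true))) - 1
      ≤ iidProb D n (fun S : Fin n → X × Bool =>
          EAcc A n ε₂ D0 (fun i => ((S i).1, false)) ∧
          EAcc A n ε₂ D1 (fun i => ((S i).1, true))) :=
    iidProb_and D hD n _ _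
  have h234 : iidProb D n (fun S : Fin n → X × Bool => ERob 𝒞 A n ε₁ DX (fun i => (S i).1))
      + iidProb D n (fun S : Fin n → X × Bool =>
          EAcc A n ε₂ D0 (fun i => ((S i).1, false)) ∧
          EAcc A n ε₂ D1 (fun i => ((S i).1, true))) - 1
      ≤ iidProb D n (fun S : Fin n → X × Bool =>
          ERob 𝒞 A n ε₁ DX (fun i => (S i).1) ∧
          (EAcc A n ε₂ D0 (fun i => ((S i).1, false)) ∧
           EAcc A n ε₂ D1 (fun i => ((S i).1, true)))) :=
    iidProb_and D hD n _ _
  have h1234 : iidProb D n (EUC 𝓟 𝒞 n ε₃ D)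
      + iidProb D n (fun S : Fin n → X × Bool =>
          ERob 𝒞 A n ε₁ DX (fun i => (S i).1) ∧
          (EAcc A n ε₂ D0 (fun i => ((S i).1, false)) ∧
           EAcc A n ε₂ D1 (fun i => ((S i).1, true)))) - 1
      ≤ iidProb D n (fun S : Fin n → X × Bool =>
          EUC 𝓟 𝒞 n ε₃ D S ∧
          (ERob 𝒞 A n ε₁ DX (fun i => (S i).1) ∧
           (EAcc A n ε₂ D0 (fun i => ((S i).1, false)) ∧
            EAcc A n ε₂ D1 (fun i => ((S i).1, true))))) :=
    iidProb_and D hD n _ _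
  -- the conjunction implies multiaccuracy
  have main : ∀ S : Fin n → X × Bool,
      (EUC 𝓟 𝒞 n ε₃ D S ∧
        (ERob 𝒞 A n ε₁ DX (fun i => (S i).1) ∧
         (EAcc A n ε₂ D0 (fun i => ((S i).1, false)) ∧
          EAcc A n ε₂ D1 (fun i => ((S i).1, true))))) →
      ∀ C ∈ 𝒞, |MAerr D (A n S) C| ≤ ε₁ + ε₂ + 2 * ε₃ := by
    intro S hS C hC
    obtain ⟨h1, h2, h3, h4⟩ := hS
    set S0 : Fin n → X × Bool := fun i => ((S i).1, false) with hS0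
    set S1 : Fin n → X × Bool := fun i => ((S i).1, true) with hS1
    have hSeta : (fun i => ((S i).1, (S i).2)) = S := rfl
    simp only [ERob] at h2
    have hrob0 := h2 (fun i => (S i).2) n S0 C hC
    have hrob1 := h2 (fun i => (S i).2) n S1 C hC
    rw [hSeta] at hrob0 hrob1
    rw [hDXsum (fun x => (A n S x - A n S0 x) * ind C x)] at hrob0
    rw [hDXsum (fun x => (A n S x - A n S1 x) * ind C x)] at hrob1
    have hsd0 : symmDiffC S S0 C = 0 := by
      simp only [symmDiffC, mult, hS0]
      simp
    have hsd1 : symmDiffC S S1 C = 0 := by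
      simp only [symmDiffC, mult, hS1]
      simp
    have hz0 : (∑ j, bval (S0 j).2 * ind C ((S0 j).1)) = 0 := by
      simp [hS0, bval]
    have hz1 : (∑ j, bval (S1 j).2 * ind C ((S1 j).1)) = ∑ i, ind C ((S i).1) := by
      simp [hS1, bval]
    rw [hz0, sub_zero, hsd0, mul_zero, add_zero] at hrob0
    rw [hz1, hsd1, mul_zero, add_zero] at hrob1
    -- accuracy facts
    simp only [EAcc] at h3 h4
    rw [hD0sum (fun z => bval z.2 - A n S0 z.1)] at h3
    rw [hD1sum (fun z => bval z.2 - A n S1 z.1)] at h4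
    have hA0' : |∑ z : X × Bool, D z * A n S0 z.1| ≤ ε₂ := by
      have e2 : ∑ z : X × Bool, D z * (bval ((z.1, false) : X × Bool).2
            - A n S0 ((z.1, false) : X × Bool).1)
          = -(∑ z : X × Bool, D z * A n S0 z.1) := by
        rw [← Finset.sum_neg_distrib]
        refine Finset.sum_congr rfl fun z _ => ?_
        simp [bval]
      rw [e2, abs_neg] at h3
      exact h3
    have hA1' : |∑ z : X × Bool, D z * (1 - A n S1 z.1)| ≤ ε₂ := by
      have e2 : ∑ z : X × Bool, D z * (bval ((z.1, true) : X × Bool).2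
            - A n S1 ((z.1, true) : X × Bool).1)
          = ∑ z : X × Bool, D z * (1 - A n S1 z.1) := by
        refine Finset.sum_congr rfl fun z _ => ?_
        simp [bval]
      rw [e2] at h4
      exact h4
    -- uniform convergence facts
    simp only [EUC] at h1
    obtain ⟨u1, u2⟩ := h1 (fun _ => 1) hones C hC
    have hU1' : |(1/(n:ℝ)) * ∑ i, ind C ((S i).1)
        - ∑ z : X × Bool, D z * ind C z.1| ≤ ε₃ := by
      simpa using u1
    exact det_core D hD (A n S) (A n S0) (A n S1)
      (h𝓟01 _ (hA𝓟 n S0)) (h𝓟01 _ (hA𝓟 n S1)) C n hn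
      (fun i => (S i).1) (fun i => (S i).2) ε₁ ε₂ ε₃ hrob0 hrob1 hA0' hA1' hU1' u2
  calc 1 - (2 * δ₁ + 2 * δ₂ + δ₃)
      ≤ iidProb D n (fun S : Fin n → X × Bool =>
          EUC 𝓟 𝒞 n ε₃ D S ∧
          (ERob 𝒞 A n ε₁ DX (fun i => (S i).1) ∧
           (EAcc A n ε₂ D0 (fun i => ((S i).1, false)) ∧
            EAcc A n ε₂ D1 (fun i => ((S i).1, true))))) := by linarith
    _ ≤ iidProb D n (fun S => ∀ C ∈ 𝒞, |MAerr D (A n S) C| ≤ ε₁ + ε₂ + 2 * ε₃) :=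
      iidProb_mono D hD n main
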